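/- Update answer sets satisfy postulate (I3): if the fact L_0 ← belongs to Bel((P⃗, {L_1 ←, ..., L_k ←})), then the rule L_0 ← L_1,...,L_k belongs to Bel(P⃗). -/

import Mathlib

/-- A literal over atoms `α`: an atom or a strongly negated atom. -/
inductive Lit (α : Type) where
  | pos : α → Lit α
  | neg : α → Lit α

/-- The complementary literal. -/
def Lit.compl {α : Type} : Lit α → Lit α
  | .pos a => .neg a
  | .neg a => .pos a

/-- A rule of an extended logic program: optional head literal,
prerequisites `prem`, and weakly negated body literals `nbody`. -/
structure Rule (α : Type) where
  head : Option (Lit α)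
  prem : Set (Lit α)
  nbody : Set (Lit α)

/-- A set of literals is consistent iff it contains no complementary pair. -/
def Consistent {α : Type} (S : Set (Lit α)) : Prop :=
  ∀ a : α, ¬ (Lit.pos a ∈ S ∧ Lit.neg a ∈ S)

/-- The body of `r` is true in `S`. -/
def BodyTrue {α : Type} (S : Set (Lit α)) (r : Rule α) : Prop :=
  r.prem ⊆ S ∧ ∀ L ∈ r.nbody, L ∉ S

/-- The head of `r` is true in `S` (false for constraints). -/
def HeadTrue {α : Type} (S : Set (Lit α)) (r : Rule α) : Prop :=
  ∃ L, r.head = some L ∧ L ∈ S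

/-- Rule `r` is true in `S`. -/
def RuleTrue {α : Type} (S : Set (Lit α)) (r : Rule α) : Prop :=
  BodyTrue S r → HeadTrue S r

/-- `S` is a model of program `P`. -/
def IsModel {α : Type} (S : Set (Lit α)) (P : Set (Rule α)) : Prop :=
  ∀ r ∈ P, RuleTrue S r

/-- `r` is defeated by `S`. -/
def Defeated {α : Type} (S : Set (Lit α)) (r : Rule α) : Prop :=
  ∃ L ∈ r.nbody, L ∈ S

/-- The Gelfond–Lifschitz reduct of `P` relative to `S`. -/
def Reduct {α : Type} (P : Set (Rule α)) (S : Set (Lit α)) : Set (Rule α) :=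
  { r' | ∃ r ∈ P, ¬ Defeated S r ∧ r' = Rule.mk r.head r.prem ∅ }

/-- `S` is an answer set of `P`: a consistent set of literals that is a
minimal model of the reduct `P^S`. -/
def IsAnswerSet {α : Type} (P : Set (Rule α)) (S : Set (Lit α)) : Prop :=
  Consistent S ∧ IsModel S (Reduct P S) ∧
    ∀ T ⊆ S, IsModel T (Reduct P S) → T = S

/-- The belief set of `P`: all rules true in every answer set of `P`. -/
def Bel {α : Type} (P : Set (Rule α)) : Set (Rule α) :=
  { r | ∀ S, IsAnswerSet P S → RuleTrue S r }
/-- Extended alphabet `At*`: original atoms, indexed copies `A_i`,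
and rejection atoms `rej(r)` for (named copies of) rules. -/
inductive ExtAtom (α : Type) where
  | base : α → ExtAtom α
  | idx : ℕ → α → ExtAtom α
  | rej : ℕ → Rule α → ExtAtom α

/-- Lift a literal over `α` to the corresponding literal over `At*`. -/
def liftLit {α : Type} : Lit α → Lit (ExtAtom α)
  | .pos a => .pos (.base a)
  | .neg a => .neg (.base a)

/-- The indexed copy `L_i` of a literal `L`. -/
def idxLit {α : Type} (i : ℕ) : Lit α → Lit (ExtAtom α)
  | .pos a => .pos (.idx i a)
  | .neg a => .neg (.idx i a)

/-- Literal `L` occurs in the update sequence `(P 0, …, P (n-1))`. -/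
def OccursIn {α : Type} (n : ℕ) (P : ℕ → Set (Rule α)) (L : Lit α) : Prop :=
  ∃ i < n, ∃ r ∈ P i, r.head = some L ∨ L ∈ r.prem ∨ L ∈ r.nbody

/-- The update program `P_◁` of the update sequence `(P 0, …, P (n-1))`,
an ELP over the extended alphabet `At*`. -/
def UpdProgram {α : Type} (n : ℕ) (P : ℕ → Set (Rule α)) : Set (Rule (ExtAtom α)) :=
  -- (i) all constraints
  { r' | ∃ i < n, ∃ r ∈ P i, r.head = none ∧
      r' = Rule.mk none (liftLit '' r.prem) (liftLit '' r.nbody) } ∪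
  -- (ii)  L_i ← B(r), not rej(r)
  { r' | ∃ i < n, ∃ r ∈ P i, ∃ L, r.head = some L ∧
      r' = Rule.mk (some (idxLit i L)) (liftLit '' r.prem)
             ((liftLit '' r.nbody) ∪ {Lit.pos (ExtAtom.rej i r)}) } ∪
  -- (iii)  rej(r) ← B(r), ¬L_{i+1}
  { r' | ∃ i, i + 1 < n ∧ ∃ r ∈ P i, ∃ L, r.head = some L ∧
      r' = Rule.mk (some (Lit.pos (ExtAtom.rej i r)))
             ((liftLit '' r.prem) ∪ {idxLit (i+1) L.compl}) (liftLit '' r.nbody) } ∪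
  -- (iv) inertia rules  L_i ← L_{i+1}  and  L ← L_1
  { r' | ∃ L, OccursIn n P L ∧
      ((∃ i, i + 1 < n ∧ r' = Rule.mk (some (idxLit i L)) {idxLit (i+1) L} ∅) ∨
        r' = Rule.mk (some (liftLit L)) {idxLit 0 L} ∅) }

/-- `S` is an update answer set of the sequence `(P 0, …, P (n-1))`:
the restriction to `Lit_At` of an answer set of the update program. -/
def UpdateAnswerSet {α : Type} (n : ℕ) (P : ℕ → Set (Rule α)) (S : Set (Lit α)) : Prop :=
  ∃ S' : Set (Lit (ExtAtom α)), IsAnswerSet (UpdProgram n P) S' ∧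
    S = { L | liftLit L ∈ S' }

/-- Two rules are conflicting iff their heads are complementary literals. -/
def Conflicting {α : Type} (r r' : Rule α) : Prop :=
  ∃ L, r.head = some L ∧ r'.head = some L.compl

/-- The founded rejection set at level `i`: rules of `P i` rejected by a
conflicting, itself non-rejected rule of some later program. -/
def RejLevel {α : Type} (n : ℕ) (P : ℕ → Set (Rule α)) (S : Set (Lit α)) (i : ℕ) :
    Set (Rule α) :=
  { r | r ∈ P i ∧ ∃ j, ∃ _ : i < j, ∃ _ : j < n, ∃ r',
      r' ∈ P j ∧ r' ∉ RejLevel n P S j ∧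
      Conflicting r r' ∧ BodyTrue S r ∧ BodyTrue S r' }
  termination_by n - i
  decreasing_by omega

/-- The founded rejection set `Rej(S, P⃗)`. -/
def Rej {α : Type} (n : ℕ) (P : ℕ → Set (Rule α)) (S : Set (Lit α)) : Set (Rule α) :=
  { r | ∃ i < n, r ∈ RejLevel n P S i }

/-- The union `∪P⃗` of all rules of the sequence. -/
def UnionSeq {α : Type} (n : ℕ) (P : ℕ → Set (Rule α)) : Set (Rule α) :=
  { r | ∃ i < n, r ∈ P i }

/-- The belief set of an update sequence: all rules true in every update
answer set. -/
def BelSeq {α : Type} (n : ℕ) (P : ℕ → Set (Rule α)) : Set (Rule α) :=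
  { r | ∀ S, UpdateAnswerSet n P S → RuleTrue S r }

/-- Append one program to a sequence of length `n`. -/
def append1 {α : Type} (n : ℕ) (P : ℕ → Set (Rule α)) (Q : Set (Rule α)) :
    ℕ → Set (Rule α) :=
  fun i => if i < n then P i else Q

/-!
Let `S'` be an answer set of the update program of `P⃗` whose restriction `S` contains the new
facts `F`. Then `S' ∪ {L_i | L ∈ F, i ≤ n}` is an answer set of the update program of
`(P⃗, {L ← | L ∈ F})`: the new facts derive exactly their indexed copies, which inertia carries
down to `L ∈ S`, and any rule of `P⃗` they newly reject has a head complementary to a literal of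
`S`, so it was already rejected in `S'`. Hence `S` is an update answer set of the extended
sequence as well, and a fact believed there holds in `S`.
-/

section

variable {α : Type}

theorem liftLit_ne_idxLit (L M : Lit α) (i : ℕ) : liftLit L ≠ idxLit i M := by
  cases L <;> cases M <;> simp [liftLit, idxLit]

theorem idxLit_ne_pos_rej (M : Lit α) (i j : ℕ) (r : Rule α) :
    idxLit i M ≠ Lit.pos (ExtAtom.rej j r) := by
  cases M <;> simp [idxLit]

theorem idxLit_inj {L M : Lit α} {i j : ℕ} (h : idxLit i L = idxLit j M) : i = j ∧ L = M := by
  cases L <;> cases M <;> simp_all [idxLit]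

theorem Consistent.liftLit_compl_notMem {S : Set (Lit (ExtAtom α))} (hS : Consistent S)
    {L : Lit α} (hL : liftLit L ∈ S) : liftLit L.compl ∉ S := by
  cases L with
  | pos a => exact fun h => hS (.base a) ⟨hL, h⟩
  | neg a => exact fun h => hS (.base a) ⟨h, hL⟩

theorem Defeated.mono {S T : Set (Lit α)} {r : Rule α} (hST : S ⊆ T) : Defeated S r → Defeated T r
  | ⟨L, hL, hLS⟩ => ⟨L, hL, hST hLS⟩

section AnswerSet

variable {P : Set (Rule α)} {S T : Set (Lit α)}

theorem isModel_reduct_iff :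
    IsModel T (Reduct P S) ↔ ∀ r ∈ P, ¬ Defeated S r → r.prem ⊆ T → HeadTrue T r := by
  constructor
  · intro h r hr hnd hp
    exact h ⟨r.head, r.prem, ∅⟩ ⟨r, hr, hnd, rfl⟩ ⟨hp, fun _ h => (Set.notMem_empty _ h).elim⟩
  · rintro h _ ⟨r, hr, hnd, rfl⟩ ⟨hp, -⟩
    exact h r hr hnd hp

theorem not_defeated_mk_empty {S : Set (Lit α)} (h : Option (Lit α)) (p : Set (Lit α)) :
    ¬ Defeated S ⟨h, p, ∅⟩ :=
  fun ⟨_, hx, _⟩ => Set.notMem_empty _ hx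

theorem IsModel.head_mem_of_reduct (hT : IsModel T (Reduct P S)) {r : Rule α} (hr : r ∈ P)
    (hnd : ¬ Defeated S r) (hp : r.prem ⊆ T) {L : Lit α} (hL : r.head = some L) : L ∈ T := by
  obtain ⟨M, hM, hMT⟩ := isModel_reduct_iff.1 hT r hr hnd hp
  rw [hL, Option.some_inj] at hM
  exact hM ▸ hMT

theorem IsAnswerSet.headTrue (hS : IsAnswerSet P S) {r : Rule α} (hr : r ∈ P)
    (hnd : ¬ Defeated S r) (hp : r.prem ⊆ S) : HeadTrue S r :=
  isModel_reduct_iff.1 hS.2.1 r hr hnd hp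

theorem IsAnswerSet.head_mem (hS : IsAnswerSet P S) {r : Rule α} (hr : r ∈ P)
    (hnd : ¬ Defeated S r) (hp : r.prem ⊆ S) {L : Lit α} (hL : r.head = some L) : L ∈ S :=
  hS.2.1.head_mem_of_reduct hr hnd hp hL

theorem IsAnswerSet.exists_rule_of_mem (hS : IsAnswerSet P S) {L : Lit α} (hL : L ∈ S) :
    ∃ r ∈ P, ¬ Defeated S r ∧ r.prem ⊆ S ∧ r.head = some L := by
  by_contra! hunsupp
  have hmodel : IsModel (S \ {L}) (Reduct P S) := by
    refine isModel_reduct_iff.2 fun r hr hnd hp => ?_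
    obtain ⟨M, hM, hMS⟩ := hS.headTrue hr hnd (hp.trans Set.sdiff_subset)
    refine ⟨M, hM, hMS, fun hML => ?_⟩
    exact hunsupp r hr hnd (hp.trans Set.sdiff_subset) (hML ▸ hM)
  exact (hS.2.2 _ Set.sdiff_subset hmodel ▸ hL).2 rfl

theorem IsAnswerSet.subset_of_isModel_reduct {P' : Set (Rule α)} {X : Set (Lit α)}
    (hS : IsAnswerSet P S) (hPP' : P ⊆ P') (hX : ∀ r ∈ P, Defeated X r → Defeated S r)
    (hT : IsModel T (Reduct P' X)) : S ⊆ T := by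
  have hTS : IsModel (T ∩ S) (Reduct P S) := by
    refine isModel_reduct_iff.2 fun r hr hnd hp => ?_
    obtain ⟨L, hL, hLT⟩ :=
      isModel_reduct_iff.1 hT r (hPP' hr) (mt (hX r hr) hnd) (hp.trans Set.inter_subset_left)
    exact ⟨L, hL, hLT, hS.head_mem hr hnd (hp.trans Set.inter_subset_right) hL⟩
  calc S = T ∩ S := (hS.2.2 _ Set.inter_subset_right hTS).symm
    _ ⊆ T := Set.inter_subset_left

end AnswerSet

section UpdProgram

variable {n : ℕ} {P : ℕ → Set (Rule α)}

theorem constraint_mem_updProgram {i : ℕ} (hi : i < n) {r : Rule α} (hr : r ∈ P i)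
    (hc : r.head = none) :
    Rule.mk none (liftLit '' r.prem) (liftLit '' r.nbody) ∈ UpdProgram n P :=
  Or.inl <| Or.inl <| Or.inl ⟨i, hi, r, hr, hc, rfl⟩

theorem derive_mem_updProgram {i : ℕ} (hi : i < n) {r : Rule α} (hr : r ∈ P i) {L : Lit α}
    (hL : r.head = some L) :
    Rule.mk (some (idxLit i L)) (liftLit '' r.prem)
      (liftLit '' r.nbody ∪ {Lit.pos (ExtAtom.rej i r)}) ∈ UpdProgram n P :=
  Or.inl <| Or.inl <| Or.inr ⟨i, hi, r, hr, L, hL, rfl⟩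

theorem reject_mem_updProgram {i : ℕ} (hi : i + 1 < n) {r : Rule α} (hr : r ∈ P i) {L : Lit α}
    (hL : r.head = some L) :
    Rule.mk (some (Lit.pos (ExtAtom.rej i r))) (liftLit '' r.prem ∪ {idxLit (i + 1) L.compl})
      (liftLit '' r.nbody) ∈ UpdProgram n P :=
  Or.inl <| Or.inr ⟨i, hi, r, hr, L, hL, rfl⟩

theorem inertia_mem_updProgram {L : Lit α} (hL : OccursIn n P L) {i : ℕ} (hi : i + 1 < n) :
    Rule.mk (some (idxLit i L)) {idxLit (i + 1) L} ∅ ∈ UpdProgram n P :=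
  Or.inr ⟨L, hL, Or.inl ⟨i, hi, rfl⟩⟩

theorem lift_mem_updProgram {L : Lit α} (hL : OccursIn n P L) :
    Rule.mk (some (liftLit L)) {idxLit 0 L} ∅ ∈ UpdProgram n P :=
  Or.inr ⟨L, hL, Or.inr rfl⟩

theorem idxLit_notMem_nbody_of_mem_updProgram {r : Rule (ExtAtom α)} (hr : r ∈ UpdProgram n P)
    (i : ℕ) (L : Lit α) : idxLit i L ∉ r.nbody := by
  rcases hr with (((⟨_, -, _, -, -, rfl⟩ | ⟨_, -, _, -, _, -, rfl⟩) | ⟨_, -, _, -, _, -, rfl⟩) |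
    ⟨_, -, ⟨_, -, rfl⟩ | rfl⟩)
  · rintro ⟨M, -, hM⟩
    exact liftLit_ne_idxLit M L i hM
  · rintro (⟨M, -, hM⟩ | hrej)
    · exact liftLit_ne_idxLit M L i hM
    · exact idxLit_ne_pos_rej L _ _ _ hrej
  · rintro ⟨M, -, hM⟩
    exact liftLit_ne_idxLit M L i hM
  all_goals exact Set.notMem_empty _

variable {S : Set (Lit (ExtAtom α))}

theorem IsAnswerSet.idxLit_mem_updProgram (hS : IsAnswerSet (UpdProgram n P) S)
    {i : ℕ} {L : Lit α} (h : idxLit i L ∈ S) : i < n ∧ OccursIn n P L := by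
  obtain ⟨r, hr, -, -, hhead⟩ := hS.exists_rule_of_mem h
  rcases hr with (((⟨_, -, _, -, -, rfl⟩ | ⟨i', hi', r', hr', M, hM, rfl⟩) |
    ⟨_, -, _, -, _, -, rfl⟩) | ⟨M, hocc, ⟨i', hi', rfl⟩ | rfl⟩) <;>
    simp only [Option.some_inj, reduceCtorEq] at hhead
  · obtain ⟨rfl, rfl⟩ := idxLit_inj hhead
    exact ⟨hi', i', hi', r', hr', Or.inl hM⟩
  · exact (idxLit_ne_pos_rej _ _ _ _ hhead.symm).elim
  · obtain ⟨rfl, rfl⟩ := idxLit_inj hhead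
    exact ⟨by omega, hocc⟩
  · exact (liftLit_ne_idxLit _ _ _ hhead).elim

theorem IsAnswerSet.lt_of_pos_rej_mem_updProgram (hS : IsAnswerSet (UpdProgram n P) S)
    {i : ℕ} {r : Rule α} (h : Lit.pos (ExtAtom.rej i r) ∈ S) : i + 1 < n := by
  obtain ⟨r', hr', -, -, hhead⟩ := hS.exists_rule_of_mem h
  rcases hr' with (((⟨_, -, _, -, -, rfl⟩ | ⟨_, -, _, -, _, -, rfl⟩) |
    ⟨i', hi', _, -, _, -, rfl⟩) | ⟨M, -, ⟨_, -, rfl⟩ | rfl⟩) <;>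
    simp only [Option.some_inj, reduceCtorEq] at hhead
  · exact (idxLit_ne_pos_rej _ _ _ _ hhead).elim
  · cases hhead
    exact hi'
  · exact (idxLit_ne_pos_rej _ _ _ _ hhead).elim
  · cases M <;> cases hhead

theorem IsAnswerSet.liftLit_mem_of_idxLit_mem_updProgram (hS : IsAnswerSet (UpdProgram n P) S)
    {i : ℕ} {L : Lit α} (h : idxLit i L ∈ S) : liftLit L ∈ S := by
  induction i with
  | zero =>
    exact hS.head_mem (lift_mem_updProgram (hS.idxLit_mem_updProgram h).2)
      (not_defeated_mk_empty _ _) (Set.singleton_subset_iff.2 h) rfl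
  | succ i ih =>
    obtain ⟨hi, hocc⟩ := hS.idxLit_mem_updProgram h
    exact ih (hS.head_mem (inertia_mem_updProgram hocc hi) (not_defeated_mk_empty _ _)
      (Set.singleton_subset_iff.2 h) rfl)

theorem IsAnswerSet.pos_rej_mem_of_liftLit_compl_mem (hS : IsAnswerSet (UpdProgram n P) S)
    {i : ℕ} (hi : i < n) {r : Rule α} (hr : r ∈ P i) {L : Lit α} (hL : r.head = some L)
    (hprem : liftLit '' r.prem ⊆ S)
    (hnbody : ∀ x ∈ liftLit '' r.nbody, x ∉ S) (hcompl : liftLit L.compl ∈ S) :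
    Lit.pos (ExtAtom.rej i r) ∈ S := by
  by_contra hrej
  have hnd : ¬ Defeated S
      ⟨some (idxLit i L), liftLit '' r.prem, liftLit '' r.nbody ∪ {.pos (.rej i r)}⟩ := by
    rintro ⟨x, hx | rfl, hxS⟩
    · exact hnbody x hx hxS
    · exact hrej hxS
  have hderived := hS.head_mem (derive_mem_updProgram hi hr hL) hnd hprem rfl
  exact hS.1.liftLit_compl_notMem (hS.liftLit_mem_of_idxLit_mem_updProgram hderived) hcompl

end UpdProgram

section AppendFacts

variable {n : ℕ} {P : ℕ → Set (Rule α)}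

theorem append1_of_lt {Q : Set (Rule α)} {i : ℕ} (hi : i < n) : append1 n P Q i = P i :=
  if_pos hi

theorem append1_self {Q : Set (Rule α)} : append1 n P Q n = Q :=
  if_neg (lt_irrefl n)

theorem OccursIn.append1 {Q : Set (Rule α)} {L : Lit α} (h : OccursIn n P L) :
    OccursIn (n + 1) (append1 n P Q) L := by
  obtain ⟨i, hi, r, hr, hocc⟩ := h
  exact ⟨i, Nat.lt_succ_of_lt hi, r, by rwa [append1_of_lt hi], hocc⟩

theorem updProgram_subset_updProgram_append1 (Q : Set (Rule α)) :
    UpdProgram n P ⊆ UpdProgram (n + 1) (append1 n P Q) := by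
  rintro _ (((⟨i, hi, r, hr, hc, rfl⟩ | ⟨i, hi, r, hr, L, hL, rfl⟩) | ⟨i, hi, r, hr, L, hL, rfl⟩) |
    ⟨L, hocc, ⟨i, hi, rfl⟩ | rfl⟩)
  · exact constraint_mem_updProgram (Nat.lt_succ_of_lt hi) (by rwa [append1_of_lt hi]) hc
  · exact derive_mem_updProgram (Nat.lt_succ_of_lt hi) (by rwa [append1_of_lt hi]) hL
  · exact reject_mem_updProgram (Nat.lt_succ_of_lt hi) (by rwa [append1_of_lt (by omega)]) hL
  · exact inertia_mem_updProgram hocc.append1 (Nat.lt_succ_of_lt hi)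
  · exact lift_mem_updProgram hocc.append1

def factProgram (F : Set (Lit α)) : Set (Rule α) :=
  {r | ∃ L ∈ F, r = Rule.mk (some L) ∅ ∅}

def idxCopies (n : ℕ) (F : Set (Lit α)) : Set (Lit (ExtAtom α)) :=
  {x | ∃ L ∈ F, ∃ i ≤ n, x = idxLit i L}

variable {F : Set (Lit α)} {S : Set (Lit (ExtAtom α))}

theorem occursIn_append1_factProgram {L : Lit α} (hL : L ∈ F) :
    OccursIn (n + 1) (append1 n P (factProgram F)) L :=
  ⟨n, lt_add_one n, _, by rw [append1_self]; exact ⟨L, hL, rfl⟩, Or.inl rfl⟩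

theorem mem_of_mem_union_idxCopies {x : Lit (ExtAtom α)} (hx : x ∈ S ∪ idxCopies n F)
    (hne : ∀ i L, x ≠ idxLit i L) : x ∈ S := by
  rcases hx with hx | ⟨L, -, i, -, rfl⟩
  · exact hx
  · exact (hne i L rfl).elim

theorem liftLit_mem_union_idxCopies {L : Lit α} :
    liftLit L ∈ S ∪ idxCopies n F ↔ liftLit L ∈ S :=
  ⟨fun h => mem_of_mem_union_idxCopies h fun i M => liftLit_ne_idxLit L M i, Or.inl⟩

theorem IsAnswerSet.consistent_union_idxCopies (hS : IsAnswerSet (UpdProgram n P) S)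
    (hF : ∀ L ∈ F, liftLit L ∈ S) : Consistent (S ∪ idxCopies n F) := by
  have hidx : ∀ i M, idxLit i M ∈ S ∪ idxCopies n F → liftLit M ∈ S := by
    rintro i M (h | ⟨L, hL, j, -, h⟩)
    · exact hS.liftLit_mem_of_idxLit_mem_updProgram h
    · exact (idxLit_inj h).2 ▸ hF L hL
  rintro (b | ⟨i, b⟩ | ⟨i, r⟩) ⟨hpos, hneg⟩
  · exact hS.1 _ ⟨(liftLit_mem_union_idxCopies (L := .pos b)).1 hpos,
      (liftLit_mem_union_idxCopies (L := .neg b)).1 hneg⟩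
  · exact hS.1 (.base b) ⟨hidx i (.pos b) hpos, hidx i (.neg b) hneg⟩
  · exact hS.1 _ ⟨mem_of_mem_union_idxCopies hpos (by rintro j (_ | _) ⟨⟩),
      mem_of_mem_union_idxCopies hneg (by rintro j (_ | _) ⟨⟩)⟩

theorem IsAnswerSet.isModel_reduct_append1_factProgram (hS : IsAnswerSet (UpdProgram n P) S)
    (hF : ∀ L ∈ F, liftLit L ∈ S) :
    IsModel (S ∪ idxCopies n F)
      (Reduct (UpdProgram (n + 1) (append1 n P (factProgram F))) (S ∪ idxCopies n F)) := by
  have hlift : ∀ A : Set (Lit α), liftLit '' A ⊆ S ∪ idxCopies n F → liftLit '' A ⊆ S := by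
    rintro A hA _ ⟨L, hL, rfl⟩
    exact liftLit_mem_union_idxCopies.1 (hA ⟨L, hL, rfl⟩)
  have hnd : ∀ r, ¬ Defeated (S ∪ idxCopies n F) r → ¬ Defeated S r :=
    fun r => mt (Defeated.mono Set.subset_union_left)
  refine isModel_reduct_iff.2 ?_
  rintro _ (((⟨i, hi, r, hr, hc, rfl⟩ | ⟨i, hi, r, hr, L, hL, rfl⟩) | ⟨i, hi, r, hr, L, hL, rfl⟩) |
    ⟨L, -, ⟨i, hi, rfl⟩ | rfl⟩) hndX hp
  · rcases Nat.lt_succ_iff_lt_or_eq.1 hi with hi | rfl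
    · rw [append1_of_lt hi] at hr
      obtain ⟨_, h, -⟩ := hS.headTrue (constraint_mem_updProgram hi hr hc) (hnd _ hndX) (hlift _ hp)
      cases h
    · rw [append1_self] at hr
      obtain ⟨L, -, rfl⟩ := hr
      cases hc
  · rcases Nat.lt_succ_iff_lt_or_eq.1 hi with hi | rfl
    · rw [append1_of_lt hi] at hr
      exact ⟨_, rfl, Or.inl (hS.head_mem (derive_mem_updProgram hi hr hL) (hnd _ hndX)
        (hlift _ hp) rfl)⟩
    · rw [append1_self] at hr
      obtain ⟨M, hM, rfl⟩ := hr
      cases hL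
      exact ⟨_, rfl, Or.inr ⟨L, hM, i, le_rfl, rfl⟩⟩
  · have hi : i < n := by omega
    rw [append1_of_lt hi] at hr
    have hprem := hlift _ (Set.subset_union_left.trans hp)
    refine ⟨_, rfl, Or.inl ?_⟩
    rcases hp (Or.inr rfl) with hcompl | ⟨M, hM, j, -, hMeq⟩
    · exact hS.head_mem (reject_mem_updProgram (hS.idxLit_mem_updProgram hcompl).1 hr hL)
        (hnd _ hndX) (Set.union_subset hprem (Set.singleton_subset_iff.2 hcompl)) rfl
    · rw [← (idxLit_inj hMeq).2] at hM
      exact hS.pos_rej_mem_of_liftLit_compl_mem hi hr hL hprem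
        (fun x hx hxS => hnd _ hndX ⟨x, hx, hxS⟩) (hF _ hM)
  · rcases hp rfl with h | ⟨M, hM, j, -, hMeq⟩
    · obtain ⟨hi', hocc'⟩ := hS.idxLit_mem_updProgram h
      exact ⟨_, rfl, Or.inl (hS.head_mem (inertia_mem_updProgram hocc' hi')
        (not_defeated_mk_empty _ _) (Set.singleton_subset_iff.2 h) rfl)⟩
    · obtain ⟨rfl, rfl⟩ := idxLit_inj hMeq
      exact ⟨_, rfl, Or.inr ⟨L, hM, i, by omega, rfl⟩⟩
  · rcases hp rfl with h | ⟨M, hM, j, -, hMeq⟩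
    · exact ⟨_, rfl, Or.inl (hS.liftLit_mem_of_idxLit_mem_updProgram h)⟩
    · obtain ⟨-, rfl⟩ := idxLit_inj hMeq
      exact ⟨_, rfl, Or.inl (hF _ hM)⟩

theorem IsAnswerSet.union_idxCopies_subset (hS : IsAnswerSet (UpdProgram n P) S)
    {T : Set (Lit (ExtAtom α))}
    (hT : IsModel T
      (Reduct (UpdProgram (n + 1) (append1 n P (factProgram F))) (S ∪ idxCopies n F))) :
    S ∪ idxCopies n F ⊆ T := by
  refine Set.union_subset (hS.subset_of_isModel_reduct
    (updProgram_subset_updProgram_append1 _) ?_ hT) ?_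
  · rintro r hr ⟨x, hx, hxS | ⟨L, -, i, -, rfl⟩⟩
    · exact ⟨x, hx, hxS⟩
    · exact (idxLit_notMem_nbody_of_mem_updProgram hr i L hx).elim
  · rintro _ ⟨L, hL, i, hi, rfl⟩
    have hfact : Rule.mk (some L) ∅ ∅ ∈ append1 n P (factProgram F) n := by
      rw [append1_self]
      exact ⟨L, hL, rfl⟩
    have hnd : ¬ Defeated (S ∪ idxCopies n F)
        ⟨some (idxLit n L), liftLit '' ∅, liftLit '' ∅ ∪ {.pos (.rej n ⟨some L, ∅, ∅⟩)}⟩ := by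
      rintro ⟨x, ⟨_, h, -⟩ | rfl, hxS | ⟨M, -, j, -, hxM⟩⟩
      · exact Set.notMem_empty _ h
      · exact Set.notMem_empty _ h
      · exact (lt_irrefl n) (Nat.lt_of_succ_lt (hS.lt_of_pos_rej_mem_updProgram hxS))
      · exact idxLit_ne_pos_rej _ _ _ _ hxM.symm
    induction hi using Nat.decreasingInduction with
    | self =>
      exact hT.head_mem_of_reduct (derive_mem_updProgram (lt_add_one n) hfact rfl) hnd
        (by simp) rfl
    | of_succ i hi ih =>
      exact hT.head_mem_of_reduct
        (inertia_mem_updProgram (occursIn_append1_factProgram hL) (by omega))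
        (not_defeated_mk_empty _ _) (Set.singleton_subset_iff.2 ih) rfl

end AppendFacts

theorem UpdateAnswerSet.append1_factProgram {n : ℕ} {P : ℕ → Set (Rule α)} {S : Set (Lit α)}
    (hS : UpdateAnswerSet n P S) {F : Set (Lit α)} (hF : F ⊆ S) :
    UpdateAnswerSet (n + 1) (append1 n P (factProgram F)) S := by
  obtain ⟨S', hS', rfl⟩ := hS
  refine ⟨S' ∪ idxCopies n F, ⟨hS'.consistent_union_idxCopies hF,
    hS'.isModel_reduct_append1_factProgram hF,
    fun T hTS hT => hTS.antisymm (hS'.union_idxCopies_subset hT)⟩, ?_⟩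
  ext L
  exact liftLit_mem_union_idxCopies.symm

end

/-- postulate I3: if the fact `L_0 ←` belongs to
`Bel((P⃗, {L_1 ←, …, L_k ←}))`, then the rule `L_0 ← L_1,…,L_k`
belongs to `Bel(P⃗)`. -/
theorem i3_holds {α : Type} (n : ℕ) (Pseq : ℕ → Set (Rule α))
    (k : ℕ) (Ls : ℕ → Lit α) (L0 : Lit α)
    (h : Rule.mk (some L0) ∅ ∅ ∈
      BelSeq (n + 1) (append1 n Pseq
        { r | ∃ i < k, r = Rule.mk (some (Ls i)) ∅ ∅ })) :
    Rule.mk (some L0) { L | ∃ i < k, L = Ls i } ∅ ∈ BelSeq n Pseq := by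
  intro S hS hbody
  have hfacts : { r | ∃ i < k, r = Rule.mk (some (Ls i)) ∅ ∅ } =
      factProgram { L | ∃ i < k, L = Ls i } := by
    ext r
    simp [factProgram]
  rw [hfacts] at h
  exact h S (hS.append1_factProgram hbody.1)
    ⟨Set.empty_subset S, fun _ h => (Set.notMem_empty _ h).elim⟩
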